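/- arXiv:2102.05629 — 2 statements merged into one kernel-verified Lean document; each statement's English description precedes it below -/
import Mathlib

section
/- For every d ≥ 1, every k ≥ 1, and every polynomial P: ℝ^d → ℝ of total degree at most k, it holds that E_{x~N(0,I_d)}[‖∇P(x)‖²] ≤ k · E_{x~N(0,I_d)}[P(x)²], where ‖·‖ is the Euclidean norm and ∇P is the gradient of P. -/
/-!
Gaussian integration by parts, `E[xᵢ Q] = E[∂ᵢ Q]`, makes the Ornstein–Uhlenbeck operator
`L = x · ∇ - Δ` symmetric on polynomials, with `E[P · L Q] = ∑ᵢ E[∂ᵢP ∂ᵢQ]`; in particular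
`E[‖∇Q‖²] = E[Q · L Q]`. The commutation `∂ᵢ L = L ∂ᵢ + ∂ᵢ` gives
`E[(L Q)²] = ∑ᵢ (E[∂ᵢQ · L ∂ᵢQ] + E[(∂ᵢQ)²])`, so by induction on the degree
`E[(L Q)²] ≤ (m + 1) E[‖∇Q‖²]` when `deg Q ≤ m + 1`. Expanding `0 ≤ E[(L Q - (m + 1) Q)²]`
then yields `E[‖∇Q‖²] ≤ (m + 1) E[Q²]`.
-/

open MeasureTheory ProbabilityTheory Real
open scoped RealInnerProductSpace

noncomputable def stdGaussian (d : ℕ) : Measure (EuclideanSpace ℝ (Fin d)) :=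
  (Measure.pi fun _ : Fin d => gaussianReal 0 1).map
    (EuclideanSpace.equiv (Fin d) ℝ).symm

noncomputable def sgn (u : ℝ) : ℝ := if 0 ≤ u then 1 else -1

noncomputable def evalP {d : ℕ} (P : MvPolynomial (Fin d) ℝ)
    (x : EuclideanSpace ℝ (Fin d)) : ℝ :=
  MvPolynomial.eval (EuclideanSpace.equiv (Fin d) ℝ x) P

noncomputable def gradP {d : ℕ} (P : MvPolynomial (Fin d) ℝ)
    (x : EuclideanSpace ℝ (Fin d)) : EuclideanSpace ℝ (Fin d) :=
  WithLp.toLp 2 (fun i => MvPolynomial.eval (EuclideanSpace.equiv (Fin d) ℝ x) (MvPolynomial.pderiv i P))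

noncomputable def gradMatrix {d : ℕ} (P : MvPolynomial (Fin d) ℝ) :
    Matrix (Fin d) (Fin d) ℝ :=
  fun i j => ∫ x, gradP P x i * gradP P x j ∂(stdGaussian d)

noncomputable def eigSpace {d : ℕ} (M : Matrix (Fin d) (Fin d) ℝ) (η : ℝ) :
    Submodule ℝ (EuclideanSpace ℝ (Fin d)) :=
  Submodule.span ℝ {v | v ≠ 0 ∧ ∃ μ : ℝ, η ≤ μ ∧ M.mulVec v = μ • v}

noncomputable def smoothAlong {d : ℕ} (f : EuclideanSpace ℝ (Fin d) → ℝ)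
    (ξ x : EuclideanSpace ℝ (Fin d)) : ℝ :=
  ∫ g, f (x - ⟪ξ, x⟫ • ξ + g • ξ) ∂(gaussianReal 0 1)

lemma hasDerivAt_gaussianPDFReal_zero_one (x : ℝ) :
    HasDerivAt (gaussianPDFReal 0 1) (-x * gaussianPDFReal 0 1 x) x := by
  have hφ : gaussianPDFReal 0 1 = fun y => (√(2 * π))⁻¹ * exp (-y ^ 2 / 2) := by
    funext y
    simp [gaussianPDFReal]
  rw [hφ]
  exact (((hasDerivAt_pow 2 x).neg.div_const 2).exp.const_mul _).congr_deriv
    (by simp only [Pi.neg_apply]; push_cast; ring)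

lemma integrable_gaussianPDFReal_mul_iff {μ : ℝ} {v : NNReal} (hv : v ≠ 0) {f : ℝ → ℝ} :
    Integrable (fun x => gaussianPDFReal μ v x * f x) ↔ Integrable f (gaussianReal μ v) := by
  rw [gaussianReal_of_var_ne_zero μ hv, integrable_withDensity_iff_integrable_smul'
    (measurable_gaussianPDF μ v) (ae_of_all _ fun _ => gaussianPDF_lt_top)]
  simp [toReal_gaussianPDF]

lemma integrable_pow_gaussianReal (μ : ℝ) (v : NNReal) (n : ℕ) :
    Integrable (fun x => x ^ n) (gaussianReal μ v) :=
  (memLp_id_gaussianReal n).integrable_norm_pow'.mono' (by fun_prop)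
    (ae_of_all _ fun x => by simp [norm_pow])

lemma integral_pow_succ_gaussianReal (n : ℕ) :
    ∫ x, x ^ (n + 1) ∂gaussianReal 0 1 = n * ∫ x, x ^ (n - 1) ∂gaussianReal 0 1 := by
  have hint (m : ℕ) : Integrable (fun x => gaussianPDFReal 0 1 x * x ^ m) :=
    (integrable_gaussianPDFReal_mul_iff one_ne_zero).2 (integrable_pow_gaussianReal 0 1 m)
  have ibp := integral_mul_deriv_eq_deriv_mul_of_integrable
    (u := fun x : ℝ => x ^ n) (u' := fun x => n * x ^ (n - 1))
    (fun x _ => hasDerivAt_pow n x) (fun x _ => hasDerivAt_gaussianPDFReal_zero_one x)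
    ((hint (n + 1)).neg.congr
      (ae_of_all _ fun x => by simp only [Pi.neg_apply, Pi.mul_apply]; ring))
    (((hint (n - 1)).const_mul n).congr (ae_of_all _ fun x => by simp only [Pi.mul_apply]; ring))
    ((hint n).congr (ae_of_all _ fun x => mul_comm _ _))
  simp only [integral_gaussianReal_eq_integral_smul one_ne_zero, smul_eq_mul]
  calc ∫ x, gaussianPDFReal 0 1 x * x ^ (n + 1)
      = -∫ x, x ^ n * (-x * gaussianPDFReal 0 1 x) := by
        rw [← integral_neg]; congr 1 with x; ring
    _ = ∫ x, n * x ^ (n - 1) * gaussianPDFReal 0 1 x := by rw [ibp, neg_neg]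
    _ = n * ∫ x, gaussianPDFReal 0 1 x * x ^ (n - 1) := by
        rw [← integral_const_mul]; congr 1 with x; ring

namespace MvPolynomial

section Algebra

variable {σ R : Type*} [CommRing R]

lemma pderiv_pderiv_comm (i j : σ) (Q : MvPolynomial σ R) :
    pderiv i (pderiv j Q) = pderiv j (pderiv i Q) := by
  have h : ⁅pderiv i, pderiv j⁆ = (0 : Derivation R (MvPolynomial σ R) (MvPolynomial σ R)) :=
    derivation_ext fun k => by
      classical
      rw [Derivation.commutator_apply, pderiv_X, pderiv_X]
      simp [Pi.single_apply, apply_ite]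
  rw [← sub_eq_zero, ← Derivation.commutator_apply, h, Derivation.zero_apply]

lemma pderiv_eq_zero_of_totalDegree_eq_zero {Q : MvPolynomial σ R} (hQ : Q.totalDegree = 0)
    (i : σ) : pderiv i Q = 0 := by
  rw [totalDegree_eq_zero_iff_eq_C.1 hQ, pderiv_C]

lemma totalDegree_pderiv_le {m : ℕ} {Q : MvPolynomial σ R} (hQ : Q.totalDegree ≤ m + 1)
    (i : σ) : (pderiv i Q).totalDegree ≤ m := by
  refine Finset.sup_le fun β hβ => ?_
  have hcoeff : coeff (β + Finsupp.single i 1) Q ≠ 0 := by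
    rw [mem_support_iff, coeff_pderiv] at hβ
    exact left_ne_zero_of_mul hβ
  have hdeg := (le_totalDegree (mem_support_iff.2 hcoeff)).trans hQ
  rw [Finsupp.sum_add_index' (fun _ => rfl) fun _ _ _ => rfl, Finsupp.sum_single_index rfl]
    at hdeg
  omega

variable [Fintype σ]

noncomputable def ornsteinUhlenbeck (Q : MvPolynomial σ R) : MvPolynomial σ R :=
  ∑ i, (X i * pderiv i Q - pderiv i (pderiv i Q))

lemma pderiv_ornsteinUhlenbeck (i : σ) (Q : MvPolynomial σ R) :
    pderiv i (ornsteinUhlenbeck Q) = ornsteinUhlenbeck (pderiv i Q) + pderiv i Q := by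
  classical
  have hX (j : σ) : pderiv i (X j) * pderiv j Q = if j = i then pderiv i Q else 0 := by
    rw [pderiv_X, Pi.single_apply]
    split_ifs with h <;> simp [h]
  calc pderiv i (ornsteinUhlenbeck Q)
      = ∑ j, ((X j * pderiv j (pderiv i Q) - pderiv j (pderiv j (pderiv i Q)))
          + if j = i then pderiv i Q else 0) := by
        rw [ornsteinUhlenbeck, map_sum]
        refine Finset.sum_congr rfl fun j _ => ?_
        rw [map_sub, pderiv_mul, hX, pderiv_pderiv_comm i j (pderiv j Q),
          pderiv_pderiv_comm i j Q]
        ring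
    _ = ornsteinUhlenbeck (pderiv i Q) + pderiv i Q := by
        rw [Finset.sum_add_distrib, Finset.sum_ite_eq', if_pos (Finset.mem_univ i),
          ornsteinUhlenbeck]

end Algebra

section Gaussian

variable {σ : Type*} [Fintype σ]

lemma integrable_eval_gaussian (Q : MvPolynomial σ ℝ) :
    Integrable (fun x => eval x Q) (Measure.pi fun _ : σ => gaussianReal 0 1) := by
  induction Q using MvPolynomial.induction_on' with
  | monomial α c =>
    simp only [eval_monomial, Finsupp.prod_pow]
    exact (Integrable.fintype_prod (f := fun j t => t ^ α j)
      fun j => integrable_pow_gaussianReal 0 1 (α j)).const_mul c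
  | add P Q hP hQ =>
    simp only [map_add]
    exact hP.add hQ

variable (σ) in
noncomputable def gaussianIntegral : MvPolynomial σ ℝ →ₗ[ℝ] ℝ where
  toFun Q := ∫ x, eval x Q ∂Measure.pi fun _ : σ => gaussianReal 0 1
  map_add' P Q := by
    simp only [map_add]
    exact integral_add (integrable_eval_gaussian P) (integrable_eval_gaussian Q)
  map_smul' c Q := by
    simp only [smul_eval, RingHom.id_apply, smul_eq_mul]
    exact integral_const_mul c _

lemma gaussianIntegral_apply (Q : MvPolynomial σ ℝ) :
    gaussianIntegral σ Q = ∫ x, eval x Q ∂Measure.pi fun _ : σ => gaussianReal 0 1 := rfl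

lemma gaussianIntegral_C_mul (c : ℝ) (Q : MvPolynomial σ ℝ) :
    gaussianIntegral σ (C c * Q) = c * gaussianIntegral σ Q := by
  rw [C_mul', map_smul, smul_eq_mul]

lemma gaussianIntegral_mul_self_nonneg (Q : MvPolynomial σ ℝ) :
    0 ≤ gaussianIntegral σ (Q * Q) :=
  integral_nonneg fun x => by
    rw [map_mul]
    exact mul_self_nonneg _

lemma gaussianIntegral_monomial (α : σ →₀ ℕ) (c : ℝ) :
    gaussianIntegral σ (monomial α c) = c * ∏ j, ∫ t, t ^ α j ∂gaussianReal 0 1 := by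
  simp only [gaussianIntegral_apply, eval_monomial, Finsupp.prod_pow, integral_const_mul]
  rw [integral_fintype_prod_eq_prod (f := fun j t => t ^ α j)]

lemma gaussianIntegral_X_mul (i : σ) (Q : MvPolynomial σ ℝ) :
    gaussianIntegral σ (X i * Q) = gaussianIntegral σ (pderiv i Q) := by
  classical
  induction Q using MvPolynomial.induction_on' with
  | monomial α c =>
    rw [X, monomial_mul, pderiv_monomial, gaussianIntegral_monomial, gaussianIntegral_monomial,
      Fintype.prod_eq_mul_prod_compl i, Fintype.prod_eq_mul_prod_compl i]
    have hi : (Finsupp.single i 1 + α : σ →₀ ℕ) i = α i + 1 := by simp [add_comm]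
    rw [hi, integral_pow_succ_gaussianReal, Finsupp.tsub_apply, Finsupp.single_eq_same]
    have hoff : ∀ j ∈ ({i}ᶜ : Finset σ),
        ∫ t, t ^ (Finsupp.single i 1 + α : σ →₀ ℕ) j ∂gaussianReal 0 1 =
          ∫ t, t ^ (α - Finsupp.single i 1 : σ →₀ ℕ) j ∂gaussianReal 0 1 := by
      intro j hj
      rw [Finsupp.add_apply, Finsupp.tsub_apply, Finsupp.single_eq_of_ne (by simpa using hj),
        zero_add, Nat.sub_zero]
    rw [Finset.prod_congr rfl hoff]
    ring
  | add P Q hP hQ => simp only [mul_add, map_add, hP, hQ]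

lemma gaussianIntegral_mul_ornsteinUhlenbeck (P Q : MvPolynomial σ ℝ) :
    gaussianIntegral σ (P * ornsteinUhlenbeck Q) =
      ∑ i, gaussianIntegral σ (pderiv i P * pderiv i Q) := by
  simp only [ornsteinUhlenbeck, Finset.mul_sum, map_sum]
  refine Finset.sum_congr rfl fun i _ => ?_
  rw [mul_sub, mul_left_comm, map_sub, gaussianIntegral_X_mul, pderiv_mul, map_add,
    add_sub_cancel_right]

lemma gaussianIntegral_ornsteinUhlenbeck_mul_self_le {c : ℝ} (Q : MvPolynomial σ ℝ)
    (h : ∀ i, gaussianIntegral σ (pderiv i Q * ornsteinUhlenbeck (pderiv i Q)) ≤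
      c * gaussianIntegral σ (pderiv i Q * pderiv i Q)) :
    gaussianIntegral σ (ornsteinUhlenbeck Q * ornsteinUhlenbeck Q) ≤
      (c + 1) * gaussianIntegral σ (Q * ornsteinUhlenbeck Q) := by
  rw [gaussianIntegral_mul_ornsteinUhlenbeck, gaussianIntegral_mul_ornsteinUhlenbeck,
    Finset.mul_sum]
  refine Finset.sum_le_sum fun i _ => ?_
  rw [pderiv_ornsteinUhlenbeck, add_mul, map_add, mul_comm (ornsteinUhlenbeck _)]
  linarith [h i]

lemma gaussianIntegral_mul_ornsteinUhlenbeck_le {c : ℝ} (hc : 0 < c) (Q : MvPolynomial σ ℝ)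
    (h : gaussianIntegral σ (ornsteinUhlenbeck Q * ornsteinUhlenbeck Q) ≤
      c * gaussianIntegral σ (Q * ornsteinUhlenbeck Q)) :
    gaussianIntegral σ (Q * ornsteinUhlenbeck Q) ≤ c * gaussianIntegral σ (Q * Q) := by
  set L := ornsteinUhlenbeck Q
  have hsq : (L - C c * Q) * (L - C c * Q) =
      L * L - C c * (Q * L + Q * L) + C c * (C c * (Q * Q)) := by
    ring
  have hnonneg := gaussianIntegral_mul_self_nonneg (L - C c * Q)
  rw [hsq, map_add, map_sub, gaussianIntegral_C_mul, gaussianIntegral_C_mul,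
    gaussianIntegral_C_mul, map_add] at hnonneg
  exact le_of_mul_le_mul_left (by linarith) hc

theorem sum_gaussianIntegral_pderiv_mul_self_le {m : ℕ} {Q : MvPolynomial σ ℝ}
    (hQ : Q.totalDegree ≤ m) :
    ∑ i, gaussianIntegral σ (pderiv i Q * pderiv i Q) ≤ m * gaussianIntegral σ (Q * Q) := by
  induction m generalizing Q with
  | zero => simp [pderiv_eq_zero_of_totalDegree_eq_zero (Nat.le_zero.1 hQ)]
  | succ m ih =>
    rw [← gaussianIntegral_mul_ornsteinUhlenbeck, Nat.cast_succ]
    refine gaussianIntegral_mul_ornsteinUhlenbeck_le (by positivity) Q ?_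
    refine gaussianIntegral_ornsteinUhlenbeck_mul_self_le Q fun i => ?_
    rw [gaussianIntegral_mul_ornsteinUhlenbeck]
    exact ih (totalDegree_pderiv_le hQ i)

end Gaussian

end MvPolynomial

open MvPolynomial

lemma integral_stdGaussian (d : ℕ) (f : EuclideanSpace ℝ (Fin d) → ℝ) :
    ∫ x, f x ∂stdGaussian d =
      ∫ x, f (WithLp.toLp 2 x) ∂Measure.pi fun _ => gaussianReal 0 1 :=
  integral_map_equiv (MeasurableEquiv.toLp 2 (Fin d → ℝ)) f

theorem gradient_norm_bound_polynomial_general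
    (d k : ℕ)
    (P : MvPolynomial (Fin d) ℝ) (hdeg : P.totalDegree ≤ k) :
    ∫ x, ‖gradP P x‖ ^ 2 ∂(stdGaussian d) ≤
      (k : ℝ) * ∫ x, (evalP P x) ^ 2 ∂(stdGaussian d) := by
  have hgrad : ∫ x, ‖gradP P x‖ ^ 2 ∂(stdGaussian d) =
      ∑ i, gaussianIntegral (Fin d) (pderiv i P * pderiv i P) := by
    simp only [integral_stdGaussian, EuclideanSpace.norm_sq_eq, gaussianIntegral_apply]
    rw [← integral_finsetSum _ fun i _ => integrable_eval_gaussian _]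
    congr 1 with x
    simp only [gradP, norm_eq_abs, sq, abs_mul_abs_self, map_mul]
    rfl
  have heval : ∫ x, (evalP P x) ^ 2 ∂(stdGaussian d) = gaussianIntegral (Fin d) (P * P) := by
    simp only [integral_stdGaussian, gaussianIntegral_apply, map_mul, sq]
    rfl
  rw [hgrad, heval]
  exact sum_gaussianIntegral_pderiv_mul_self_le hdeg

/-- Gaussian Poincaré-type inequality for low-degree polynomials:
the expected squared gradient norm is at most the degree times the second moment. -/
theorem gradient_norm_bound_polynomial
    (d k : ℕ) (hd : 1 ≤ d) (hk : 1 ≤ k)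
    (P : MvPolynomial (Fin d) ℝ) (hdeg : P.totalDegree ≤ k) :
    ∫ x, ‖gradP P x‖ ^ 2 ∂(stdGaussian d) ≤
      (k : ℝ) * ∫ x, (evalP P x) ^ 2 ∂(stdGaussian d) :=
  gradient_norm_bound_polynomial_general d k P hdeg
end

section
/- There exist universal constants c ∈ (0,1) and C > 0 such that the following holds. Let w₀, w ∈ ℝ^d be unit vectors, σ ∈ (0,1), α ∈ (0, c), and t ∈ ℝ with |t| ≤ c·σ·α and θ(w₀, w) ≤ c·σ·α. Set h(x) = sign(w₀·x) and h'(x) = sign(w·x + t). Then E_{x~N(0,I_d)}[ 1{h(x) ≠ h'(x)} · (1 − exp(−(w₀·x)²·(σ^{−2} − 1)/2)) ] ≤ C·σ·α². -/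
open MeasureTheory ProbabilityTheory Real
open scoped RealInnerProductSpace

/-!
Write `w = ⟪w₀, w⟫ • w₀ + P` with `P ⊥ w₀`, so that `‖P‖ = sin θ ≤ θ`. Where `h` and `h'` disagree,
`|⟪w₀, x⟫| ≤ 2 (|⟪P, x⟫| + |t|)`, and there the rejection probability is at most
`⟪w₀, x⟫² / (2σ²)`. Under the standard Gaussian, `⟪w₀, x⟫ ~ N(0, 1)` and `⟪P, x⟫ ~ N(0, ‖P‖²)`
are uncorrelated, hence independent. Integrating out `u = ⟪w₀, x⟫` first (its density is at
most `1/2`) gives `E[u² ; |u| ≤ τ] ≤ τ³`, so the mass is `O(σ⁻² (‖P‖³ + |t|³)) = O(σ α³)`.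
-/

open scoped ENNReal NNReal
open InnerProductGeometry Set

lemma abs_le_of_sgn_ne_sgn {c u p t : ℝ} (hc : c ∈ Icc (1 / 2) 1)
    (h : sgn u ≠ sgn (c * u + p + t)) : |u| ≤ 2 * (|p| + |t|) := by
  have hc₀ : 0 ≤ c := by linarith [hc.1]
  have hu : |u| ≤ 2 * |c * u| := by
    rw [abs_mul, abs_of_nonneg hc₀]; nlinarith [abs_nonneg u, hc.1]
  have hsep : |c * u| ≤ |p + t| := by
    unfold sgn at h
    split_ifs at h with hu hr hr
    · exact absurd rfl h
    · rw [abs_of_nonneg (mul_nonneg hc₀ hu)]; linarith [neg_abs_le (p + t)]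
    · rw [abs_of_nonpos (mul_nonpos_of_nonneg_of_nonpos hc₀ (by linarith))]
      linarith [le_abs_self (p + t)]
    · exact absurd rfl h
  linarith [abs_add_le p t]

lemma measurable_sgn : Measurable sgn :=
  Measurable.ite measurableSet_Ici measurable_const measurable_const

noncomputable def rejectionProb (σ u : ℝ) : ℝ := 1 - exp (-u ^ 2 * (σ⁻¹ ^ 2 - 1) / 2)

lemma rejectionProb_nonneg {σ : ℝ} (hσ₀ : 0 < σ) (hσ₁ : σ ≤ 1) (u : ℝ) :
    0 ≤ rejectionProb σ u := by
  have : 1 ≤ σ⁻¹ ^ 2 := one_le_pow₀ ((one_le_inv₀ hσ₀).2 hσ₁)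
  have : exp (-u ^ 2 * (σ⁻¹ ^ 2 - 1) / 2) ≤ 1 :=
    exp_le_one_iff.2 (by nlinarith [mul_nonneg (sq_nonneg u) (sub_nonneg.2 this)])
  unfold rejectionProb; linarith

lemma rejectionProb_le (σ u : ℝ) : rejectionProb σ u ≤ σ⁻¹ ^ 2 / 2 * u ^ 2 := by
  have := add_one_le_exp (-u ^ 2 * (σ⁻¹ ^ 2 - 1) / 2)
  unfold rejectionProb; nlinarith [sq_nonneg u]

section InnerProductSpace

variable {E : Type*} [NormedAddCommGroup E] [InnerProductSpace ℝ E]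

lemma inner_sub_inner_smul_self {w₀ : E} (hw₀ : ‖w₀‖ = 1) (w : E) :
    ⟪w₀, w - ⟪w₀, w⟫ • w₀⟫ = 0 := by
  rw [inner_sub_right, real_inner_smul_right, real_inner_self_eq_norm_sq, hw₀]
  ring

lemma norm_sub_inner_smul_eq_sin_angle_mul {w₀ : E} (hw₀ : ‖w₀‖ = 1) (w : E) :
    ‖w - ⟪w₀, w⟫ • w₀‖ = sin (angle w₀ w) * ‖w‖ := by
  have := sin_angle_mul_norm_mul_norm w₀ w
  rw [hw₀, one_mul, real_inner_self_eq_norm_sq, hw₀, real_inner_self_eq_norm_sq] at this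
  rw [this, ← sqrt_sq (norm_nonneg _), norm_sub_sq_real, norm_smul, real_inner_smul_right,
    real_inner_comm w w₀, hw₀, Real.norm_eq_abs, mul_one, sq_abs]
  ring_nf

lemma abs_inner_le_of_sgn_ne_sgn {w₀ w x : E} (hc : ⟪w₀, w⟫ ∈ Icc (1 / 2) 1) {t : ℝ}
    (h : sgn ⟪w₀, x⟫ ≠ sgn (⟪w, x⟫ + t)) :
    |⟪w₀, x⟫| ≤ 2 * (|⟪w - ⟪w₀, w⟫ • w₀, x⟫| + |t|) := by
  refine abs_le_of_sgn_ne_sgn hc (h.trans_eq ?_)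
  rw [inner_sub_left, real_inner_smul_left]
  ring_nf

end InnerProductSpace

lemma gaussianPDFReal_le_half (μ u : ℝ) : gaussianPDFReal μ 1 u ≤ 1 / 2 := by
  have h2 : 2 ≤ √(2 * π) := by
    rw [Real.le_sqrt (by norm_num) (by positivity)]
    nlinarith [pi_gt_three]
  rw [gaussianPDFReal, NNReal.coe_one, mul_one]
  calc (√(2 * π))⁻¹ * exp (-(u - μ) ^ 2 / (2 * 1)) ≤ 2⁻¹ * 1 := by
        gcongr
        exact exp_le_one_iff.2 (by nlinarith [sq_nonneg (u - μ)])
    _ = 1 / 2 := by norm_num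

lemma gaussianReal_Icc_le (μ a b : ℝ) :
    gaussianReal μ 1 (Icc a b) ≤ ENNReal.ofReal ((b - a) / 2) := by
  rw [gaussianReal_apply μ one_ne_zero]
  calc ∫⁻ u in Icc a b, gaussianPDF μ 1 u ≤ ∫⁻ _ in Icc a b, ENNReal.ofReal (1 / 2) :=
        setLIntegral_mono measurable_const fun u _ =>
          ENNReal.ofReal_le_ofReal (gaussianPDFReal_le_half μ u)
    _ = ENNReal.ofReal ((b - a) / 2) := by
        rw [setLIntegral_const, Real.volume_Icc, ← ENNReal.ofReal_mul (by norm_num)]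
        ring_nf

lemma lintegral_indicator_abs_le_sq_le (μ τ : ℝ) :
    ∫⁻ u, {u | |u| ≤ τ}.indicator (fun u => ENNReal.ofReal (u ^ 2)) u ∂gaussianReal μ 1 ≤
      ENNReal.ofReal (τ ^ 3) := by
  have hset : {u : ℝ | |u| ≤ τ} = Icc (-τ) τ := by ext; simp [abs_le]
  rw [hset, lintegral_indicator measurableSet_Icc]
  calc ∫⁻ u in Icc (-τ) τ, ENNReal.ofReal (u ^ 2) ∂gaussianReal μ 1
      ≤ ∫⁻ _ in Icc (-τ) τ, ENNReal.ofReal (τ ^ 2) ∂gaussianReal μ 1 :=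
        setLIntegral_mono measurable_const fun u hu =>
          ENNReal.ofReal_le_ofReal (sq_le_sq' hu.1 hu.2)
    _ ≤ ENNReal.ofReal (τ ^ 2) * ENNReal.ofReal ((τ - -τ) / 2) := by
        rw [setLIntegral_const]; gcongr; exact gaussianReal_Icc_le μ _ _
    _ = ENNReal.ofReal (τ ^ 3) := by
        rw [← ENNReal.ofReal_mul (sq_nonneg τ)]; ring_nf

lemma lintegral_abs_pow_three_gaussianReal_le :
    ∫⁻ g, ENNReal.ofReal (|g| ^ 3) ∂gaussianReal 0 1 ≤ ENNReal.ofReal 36 := by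
  have hmgf (t : ℝ) : ∫ g, exp (t * g) ∂gaussianReal 0 1 = exp (t ^ 2 / 2) := by
    simpa [mgf] using congrFun (mgf_id_gaussianReal (μ := 0) (v := 1)) t
  have hpt (g : ℝ) : |g| ^ 3 ≤ 6 * (exp (1 * g) + exp (-1 * g)) := by
    have h := pow_div_factorial_le_exp |g| (abs_nonneg g) 3
    have : exp |g| ≤ exp (1 * g) + exp (-1 * g) := by
      rw [one_mul, neg_one_mul]
      rcases abs_cases g with ⟨hg, -⟩ | ⟨hg, -⟩ <;> rw [hg] <;> linarith [exp_pos g, exp_pos (-g)]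
    norm_num [Nat.factorial] at h
    linarith
  have hint : Integrable (fun g => 6 * (exp (1 * g) + exp (-1 * g))) (gaussianReal 0 1) :=
    ((integrable_exp_mul_gaussianReal 1).add (integrable_exp_mul_gaussianReal (-1))).const_mul 6
  calc ∫⁻ g, ENNReal.ofReal (|g| ^ 3) ∂gaussianReal 0 1
      ≤ ∫⁻ g, ENNReal.ofReal (6 * (exp (1 * g) + exp (-1 * g))) ∂gaussianReal 0 1 :=
        lintegral_mono fun g => ENNReal.ofReal_le_ofReal (hpt g)
    _ = ENNReal.ofReal (12 * exp (1 / 2)) := by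
        rw [← ofReal_integral_eq_lintegral_ofReal hint (ae_of_all _ fun g => by positivity),
          integral_const_mul, integral_add (integrable_exp_mul_gaussianReal 1)
          (integrable_exp_mul_gaussianReal (-1)), hmgf, hmgf]
        congr 1; norm_num; ring
    _ ≤ ENNReal.ofReal 36 := by
        refine ENNReal.ofReal_le_ofReal ?_
        have : exp (1 / 2) ≤ exp 1 := exp_le_exp.2 (by norm_num)
        linarith [exp_one_lt_three]

lemma lintegral_add_abs_pow_three_gaussianReal_le (r : ℝ≥0) {a : ℝ} (ha : 0 ≤ a) :
    ∫⁻ s, ENNReal.ofReal ((|s| + a) ^ 3) ∂gaussianReal 0 (r ^ 2) ≤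
      ENNReal.ofReal (4 * (36 * r ^ 3 + a ^ 3)) := by
  have hmap : gaussianReal 0 (r ^ 2) = (gaussianReal 0 1).map ((r : ℝ) * ·) := by
    rw [gaussianReal_map_const_mul, mul_zero, mul_one]; congr 1
  have hpt (g : ℝ) : ENNReal.ofReal ((|r * g| + a) ^ 3) ≤
      ENNReal.ofReal (4 * r ^ 3) * ENNReal.ofReal (|g| ^ 3) + ENNReal.ofReal (4 * a ^ 3) := by
    rw [← ENNReal.ofReal_mul (by positivity), ← ENNReal.ofReal_add (by positivity) (by positivity),
      abs_mul, NNReal.abs_eq]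
    refine ENNReal.ofReal_le_ofReal ?_
    have hx : 0 ≤ r * |g| := by positivity
    nlinarith [mul_nonneg (add_nonneg hx ha) (sq_nonneg (r * |g| - a))]
  rw [hmap, lintegral_map (by fun_prop) (by fun_prop)]
  calc ∫⁻ g, ENNReal.ofReal ((|r * g| + a) ^ 3) ∂gaussianReal 0 1
      ≤ ∫⁻ g, (ENNReal.ofReal (4 * r ^ 3) * ENNReal.ofReal (|g| ^ 3) + ENNReal.ofReal (4 * a ^ 3))
          ∂gaussianReal 0 1 := lintegral_mono hpt
    _ ≤ ENNReal.ofReal (4 * r ^ 3) * ENNReal.ofReal 36 + ENNReal.ofReal (4 * a ^ 3) := by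
        rw [lintegral_add_right _ measurable_const, lintegral_const_mul _ (by fun_prop),
          lintegral_const, measure_univ, mul_one]
        gcongr
        exact lintegral_abs_pow_three_gaussianReal_le
    _ = ENNReal.ofReal (4 * (36 * r ^ 3 + a ^ 3)) := by
        rw [← ENNReal.ofReal_mul (by positivity),
          ← ENNReal.ofReal_add (by positivity) (by positivity)]
        ring_nf

lemma measurable_indicator_abs_le_sq (t : ℝ) :
    Measurable ({p : ℝ × ℝ | |p.1| ≤ 2 * (|p.2| + |t|)}.indicator
      (fun p => ENNReal.ofReal (p.1 ^ 2))) :=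
  (Measurable.ennreal_ofReal (by fun_prop)).indicator
    (measurableSet_le (by fun_prop) (by fun_prop))

lemma lintegral_indicator_abs_le_sq_prod_gaussianReal_le (r : ℝ≥0) (t : ℝ) :
    ∫⁻ p, {p : ℝ × ℝ | |p.1| ≤ 2 * (|p.2| + |t|)}.indicator (fun p => ENNReal.ofReal (p.1 ^ 2)) p
        ∂(gaussianReal 0 1).prod (gaussianReal 0 (r ^ 2)) ≤
      ENNReal.ofReal (32 * (36 * r ^ 3 + |t| ^ 3)) := by
  rw [lintegral_prod_symm _ (measurable_indicator_abs_le_sq t).aemeasurable]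
  calc _ ≤ ∫⁻ s, ENNReal.ofReal 8 * ENNReal.ofReal ((|s| + |t|) ^ 3) ∂gaussianReal 0 (r ^ 2) := by
        gcongr with s
        rw [← ENNReal.ofReal_mul (by norm_num),
          show 8 * (|s| + |t|) ^ 3 = (2 * (|s| + |t|)) ^ 3 by ring]
        exact lintegral_indicator_abs_le_sq_le 0 _
    _ ≤ ENNReal.ofReal 8 * ENNReal.ofReal (4 * (36 * r ^ 3 + |t| ^ 3)) := by
        rw [lintegral_const_mul _ (by fun_prop)]
        gcongr
        exact lintegral_add_abs_pow_three_gaussianReal_le _ (abs_nonneg t)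
    _ = ENNReal.ofReal (32 * (36 * r ^ 3 + |t| ^ 3)) := by
        rw [← ENNReal.ofReal_mul (by norm_num)]
        ring_nf

section StdGaussian

variable {E : Type*} [NormedAddCommGroup E] [InnerProductSpace ℝ E] [FiniteDimensional ℝ E]
  [MeasurableSpace E] [BorelSpace E]

lemma hasGaussianLaw_inner_prodMk (a b : E) :
    HasGaussianLaw (fun x : E => (⟪a, x⟫, ⟪b, x⟫)) (stdGaussian E) := by
  simpa using IsGaussian.hasGaussianLaw_id.map_fun ((innerSL ℝ a).prod (innerSL ℝ b))

lemma map_inner_stdGaussian (a : E) :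
    (stdGaussian E).map (fun x => ⟪a, x⟫) = gaussianReal 0 (‖a‖₊ ^ 2) := by
  have hmean : ∫ x, ⟪a, x⟫ ∂stdGaussian E = 0 := integral_strongDual_stdGaussian (innerSL ℝ a)
  have hvar : Var[fun x => ⟪a, x⟫; stdGaussian E] = ‖a‖ ^ 2 := by
    simpa using variance_dual_stdGaussian (E := E) (innerSL ℝ a)
  rw [(hasGaussianLaw_inner_prodMk a a).fst.map_eq_gaussianReal, hmean, hvar]
  congr 1
  ext; simp

lemma map_inner_prodMk_stdGaussian {a b : E} (hab : ⟪a, b⟫ = 0) :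
    (stdGaussian E).map (fun x => (⟪a, x⟫, ⟪b, x⟫)) =
      (gaussianReal 0 (‖a‖₊ ^ 2)).prod (gaussianReal 0 (‖b‖₊ ^ 2)) := by
  have hind : IndepFun (fun x : E => ⟪a, x⟫) (fun x => ⟪b, x⟫) (stdGaussian E) := by
    refine (hasGaussianLaw_inner_prodMk a b).indepFun_of_covariance_eq_zero ?_
    rw [← covarianceBilin_apply_eq_cov IsGaussian.memLp_two_id, covarianceBilin_stdGaussian,
      innerSL_apply_apply, hab]
  rw [(indepFun_iff_map_prod_eq_prod_map_map _ _).1 hind, map_inner_stdGaussian,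
    map_inner_stdGaussian]
  all_goals fun_prop

theorem integral_disagreement_mul_rejectionProb_le {w₀ w : E} (hw₀ : ‖w₀‖ = 1)
    (hc : ⟪w₀, w⟫ ∈ Icc (1 / 2) 1) {σ : ℝ} (hσ₀ : 0 < σ) (hσ₁ : σ ≤ 1) (t : ℝ) :
    ∫ x, (if sgn ⟪w₀, x⟫ ≠ sgn (⟪w, x⟫ + t) then (1 : ℝ) else 0) * rejectionProb σ ⟪w₀, x⟫
        ∂stdGaussian E ≤
      16 * σ⁻¹ ^ 2 * (36 * ‖w - ⟪w₀, w⟫ • w₀‖ ^ 3 + |t| ^ 3) := by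
  set P := w - ⟪w₀, w⟫ • w₀
  set f : E → ℝ := fun x =>
    (if sgn ⟪w₀, x⟫ ≠ sgn (⟪w, x⟫ + t) then (1 : ℝ) else 0) * rejectionProb σ ⟪w₀, x⟫
  set G : ℝ × ℝ → ℝ≥0∞ :=
    {p | |p.1| ≤ 2 * (|p.2| + |t|)}.indicator (fun p => ENNReal.ofReal (p.1 ^ 2))
  have hf_nonneg : 0 ≤ᵐ[stdGaussian E] f := ae_of_all _ fun x =>
    mul_nonneg (by split_ifs <;> norm_num) (rejectionProb_nonneg hσ₀ hσ₁ _)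
  have hf_meas : Measurable f := by
    refine Measurable.mul ?_ (by unfold rejectionProb; fun_prop)
    exact Measurable.ite (measurableSet_eq_fun (measurable_sgn.comp (by fun_prop))
      (measurable_sgn.comp (by fun_prop))).compl measurable_const measurable_const
  have hpt (x : E) :
      ENNReal.ofReal (f x) ≤ ENNReal.ofReal (σ⁻¹ ^ 2 / 2) * G (⟪w₀, x⟫, ⟪P, x⟫) := by
    by_cases hx : sgn ⟪w₀, x⟫ ≠ sgn (⟪w, x⟫ + t)
    · have hmem : (⟪w₀, x⟫, ⟪P, x⟫) ∈ {p : ℝ × ℝ | |p.1| ≤ 2 * (|p.2| + |t|)} :=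
        abs_inner_le_of_sgn_ne_sgn hc hx
      simp only [f, G, if_pos hx, one_mul, indicator_of_mem hmem]
      rw [← ENNReal.ofReal_mul (by positivity)]
      exact ENNReal.ofReal_le_ofReal (rejectionProb_le σ _)
    · simp only [f, if_neg hx, zero_mul, ENNReal.ofReal_zero, zero_le]
  have hlaw : (stdGaussian E).map (fun x => (⟪w₀, x⟫, ⟪P, x⟫)) =
      (gaussianReal 0 1).prod (gaussianReal 0 (‖P‖₊ ^ 2)) := by
    rw [map_inner_prodMk_stdGaussian (inner_sub_inner_smul_self hw₀ w),
      show ‖w₀‖₊ = 1 from NNReal.eq hw₀, one_pow]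
  rw [integral_eq_lintegral_of_nonneg_ae hf_nonneg hf_meas.aestronglyMeasurable]
  refine ENNReal.toReal_le_of_le_ofReal (by positivity) ?_
  calc ∫⁻ x, ENNReal.ofReal (f x) ∂stdGaussian E
      ≤ ∫⁻ x, ENNReal.ofReal (σ⁻¹ ^ 2 / 2) * G (⟪w₀, x⟫, ⟪P, x⟫) ∂stdGaussian E :=
        lintegral_mono hpt
    _ = ENNReal.ofReal (σ⁻¹ ^ 2 / 2) *
          ∫⁻ p, G p ∂(gaussianReal 0 1).prod (gaussianReal 0 (‖P‖₊ ^ 2)) := by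
        rw [lintegral_const_mul' _ _ ENNReal.ofReal_ne_top, ← hlaw,
          lintegral_map (measurable_indicator_abs_le_sq t) (by fun_prop)]
    _ ≤ ENNReal.ofReal (σ⁻¹ ^ 2 / 2) * ENNReal.ofReal (32 * (36 * ‖P‖ ^ 3 + |t| ^ 3)) := by
        gcongr
        exact lintegral_indicator_abs_le_sq_prod_gaussianReal_le _ t
    _ = ENNReal.ofReal (16 * σ⁻¹ ^ 2 * (36 * ‖P‖ ^ 3 + |t| ^ 3)) := by
        rw [← ENNReal.ofReal_mul (by positivity)]
        ring_nf

end StdGaussian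

lemma stdGaussian_eq_stdGaussian_euclideanSpace (d : ℕ) :
    stdGaussian d = ProbabilityTheory.stdGaussian (EuclideanSpace ℝ (Fin d)) := by
  rw [← map_pi_eq_stdGaussian]
  rfl

/-- if a near-homogeneous halfspace is close in angle and bias to a
homogeneous one, their disagreement restricted to rejected points is small. -/
theorem localization_rejected_mass :
    ∃ c : ℝ, c ∈ Set.Ioo (0 : ℝ) 1 ∧ ∃ C : ℝ, 0 < C ∧
      ∀ (d : ℕ) (w₀ w : EuclideanSpace ℝ (Fin d)), ‖w₀‖ = 1 → ‖w‖ = 1 →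
        ∀ σ : ℝ, σ ∈ Set.Ioo (0 : ℝ) 1 → ∀ α : ℝ, α ∈ Set.Ioo (0 : ℝ) c →
        ∀ t : ℝ, |t| ≤ c * σ * α →
          Real.arccos (⟪w₀, w⟫ / (‖w₀‖ * ‖w‖)) ≤ c * σ * α →
          ∫ x, (if sgn (⟪w₀, x⟫) ≠ sgn (⟪w, x⟫ + t) then (1 : ℝ) else 0) *
              (1 - Real.exp (-(⟪w₀, x⟫) ^ 2 * (σ⁻¹ ^ 2 - 1) / 2)) ∂(stdGaussian d) ≤
            C * σ * α ^ 2 := by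
  refine ⟨1 / 2, by norm_num, 74, by norm_num, ?_⟩
  intro d w₀ w hw₀ hw σ hσ α hα t ht hθ
  have hangle : angle w₀ w ≤ σ * α / 2 := by unfold angle; linarith
  have hP : ‖w - ⟪w₀, w⟫ • w₀‖ ≤ σ * α / 2 := by
    rw [norm_sub_inner_smul_eq_sin_angle_mul hw₀, hw, mul_one]
    exact (sin_le (angle_nonneg w₀ w)).trans hangle
  have hc : ⟪w₀, w⟫ ∈ Icc (1 / 2) 1 := by
    have hsmall : angle w₀ w ≤ 1 := by nlinarith [hσ.2, hα.2, hα.1, hσ.1]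
    rw [inner_eq_cos_angle_of_norm_eq_one hw₀ hw]
    exact ⟨by nlinarith [one_sub_sq_div_two_le_cos (x := angle w₀ w), angle_nonneg w₀ w],
      cos_le_one _⟩
  have hα₁ : α ^ 3 ≤ α ^ 2 := pow_le_pow_of_le_one hα.1.le (by linarith [hα.2]) (by norm_num)
  rw [stdGaussian_eq_stdGaussian_euclideanSpace]
  calc _ ≤ 16 * σ⁻¹ ^ 2 * (36 * ‖w - ⟪w₀, w⟫ • w₀‖ ^ 3 + |t| ^ 3) :=
        integral_disagreement_mul_rejectionProb_le hw₀ hc hσ.1 hσ.2.le t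
    _ ≤ 16 * σ⁻¹ ^ 2 * (36 * (σ * α / 2) ^ 3 + (σ * α / 2) ^ 3) := by
        gcongr; linarith
    _ = 74 * σ * α ^ 3 := by field_simp; ring
    _ ≤ 74 * σ * α ^ 2 := mul_le_mul_of_nonneg_left hα₁ (by linarith [hσ.1])
end
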